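/- For any coloring of an AGW graph and any weight function w, every F-clique has the same cardinality, equal to w(V)/w* (the number of parts of a partition of V into F-maximal sets). -/

import Mathlib

/-!
Since `w` is a left eigenvector of the adjacency matrix for the eigenvalue `k`, the `k` letter
preimages of any set `D` have total weight `k · w(D)`. If `D` is F-maximal, each of them weighs at
most `w(D)`, hence exactly `w(D)`, and is again F-maximal; with strong connectivity, every state
lies in an F-maximal set. Let `F = V·s` be an F-clique and `q ∈ F`. An F-maximal set through `q`
meets `F` only in `q`, because two states of `F` in a synchronizing set would form a synchronizing
pair; so its `s`-preimage is the fiber of `q`. Thus the `|F|` fibers of `δ_s` partition `V` and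
each weighs `w*`.
-/

/-- A directed cycle in the multigraph `E`: a nonempty list of distinct vertices,
consecutive vertices joined by edges, and an edge from the last back to the first. -/
def IsCycle {V : Type} (E : V → Multiset V) (l : List V) : Prop :=
  ∃ h : l ≠ [], l.Nodup ∧ l.Chain' (fun a b => b ∈ E a) ∧ l.head h ∈ E (l.getLast h)

/-- An AGW graph: constant outdegree `k`, strongly connected, and the gcd of the
lengths of all directed cycles is 1 (every common divisor of cycle lengths is 1). -/
def IsAGW {V : Type} (E : V → Multiset V) (k : ℕ) : Prop :=
  (∀ v, Multiset.card (E v) = k) ∧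
  (∀ u v : V, Relation.ReflTransGen (fun a b => b ∈ E a) u v) ∧
  (∀ d : ℕ, (∀ l : List V, IsCycle E l → d ∣ l.length) → d = 1)

/-- A coloring of the multigraph: for every vertex `v` the multiset of images
`{δ a v : a ∈ Fin k}` (with multiplicity) equals `E v`. -/
def IsColoring {V : Type} [Fintype V] {k : ℕ} (E : V → Multiset V)
    (δ : Fin k → V → V) : Prop :=
  ∀ v, Multiset.map (fun a => δ a v) (Finset.univ : Finset (Fin k)).val = E v

/-- The map `δ_s` of a word `s`: apply the letters of `s` from left to right. -/
def wordMap {V : Type} {k : ℕ} (δ : Fin k → V → V) (s : List (Fin k)) (v : V) : V :=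
  s.foldl (fun x a => δ a x) v

/-- A pair of states is synchronizing if some word maps them to the same state. -/
def SyncPair {V : Type} {k : ℕ} (δ : Fin k → V → V) (p q : V) : Prop :=
  ∃ s : List (Fin k), wordMap δ s p = wordMap δ s q

/-- A pair is stable if all of its images under words are equal or synchronizing. -/
def Stable {V : Type} {k : ℕ} (δ : Fin k → V → V) (p q : V) : Prop :=
  ∀ u : List (Fin k), SyncPair δ (wordMap δ u p) (wordMap δ u q)

/-- A word is synchronizing if it maps the whole state set to a single state. -/
def IsSynchronizingWord {V : Type} {k : ℕ} (δ : Fin k → V → V) (s : List (Fin k)) : Prop :=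
  ∃ q : V, ∀ v : V, wordMap δ s v = q

/-- An F-clique: an image `V·s` of the whole state set in which every pair of
distinct states is a deadlock (not synchronizing). -/
def IsFClique {V : Type} [Fintype V] [DecidableEq V] {k : ℕ}
    (δ : Fin k → V → V) (F : Finset V) : Prop :=
  (∃ s : List (Fin k), F = Finset.image (wordMap δ s) Finset.univ) ∧
  ∀ p ∈ F, ∀ q ∈ F, p ≠ q → ¬ SyncPair δ p q

/-- A weight function: positive and a left eigenvector of the adjacency matrix
(multiplicities of edges) with eigenvalue `k`. -/
def IsWeight {V : Type} [Fintype V] [DecidableEq V] (E : V → Multiset V) (k : ℕ)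
    (w : V → ℕ) : Prop :=
  (∀ v, 1 ≤ w v) ∧ ∀ q, (∑ p, w p * (E p).count q) = k * w q

/-- The weight of a set of vertices. -/
def weight {V : Type} (w : V → ℕ) (D : Finset V) : ℕ := ∑ p ∈ D, w p

/-- `D` is mapped to a single state by some word. -/
def IsSyncSet {V : Type} [Fintype V] [DecidableEq V] {k : ℕ} (δ : Fin k → V → V)
    (D : Finset V) : Prop :=
  ∃ s : List (Fin k), (D.image (wordMap δ s)).card = 1

/-- An F-maximal set: a set mapped to a single state by some word, of maximal weight. -/
def IsFMaximal {V : Type} [Fintype V] [DecidableEq V] {k : ℕ} (δ : Fin k → V → V)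
    (w : V → ℕ) (D : Finset V) : Prop :=
  IsSyncSet δ D ∧ ∀ D' : Finset V, IsSyncSet δ D' → weight w D' ≤ weight w D

/-- `w*`: the maximal weight of a set mapped to a single state by some word. -/
noncomputable def wstar {V : Type} [Fintype V] [DecidableEq V] {k : ℕ}
    (δ : Fin k → V → V) (w : V → ℕ) : ℕ :=
  sSup {m | ∃ D : Finset V, IsSyncSet δ D ∧ weight w D = m}

/-- A spanning subgraph: a choice of one outgoing edge of every vertex. -/
def IsSpanning {V : Type} (E : V → Multiset V) (f : V → V) : Prop :=
  ∀ v, f v ∈ E v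

/-- The level of a vertex: the least `m` such that `f^[m] v` is `f`-periodic. -/
noncomputable def level {V : Type} (f : V → V) (v : V) : ℕ :=
  sInf {m | ∃ n > 0, f^[n] (f^[m] v) = f^[m] v}

/-- The root of a vertex: its image on the cycle reached along its tree. -/
noncomputable def root {V : Type} (f : V → V) (v : V) : V :=
  f^[level f v] v

open Finset

section

variable {V : Type} {k : ℕ} (δ : Fin k → V → V)

@[simp] lemma wordMap_nil (v : V) : wordMap δ [] v = v := rfl

@[simp] lemma wordMap_cons (a : Fin k) (s : List (Fin k)) (v : V) :
    wordMap δ (a :: s) v = wordMap δ s (δ a v) := rfl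

lemma wordMap_append (s t : List (Fin k)) (v : V) :
    wordMap δ (s ++ t) v = wordMap δ t (wordMap δ s v) :=
  List.foldl_append

lemma weight_pos {w : V → ℕ} (hw : ∀ v, 1 ≤ w v) {D : Finset V} (hD : D.Nonempty) :
    0 < weight w D :=
  sum_pos (fun v _ => hw v) hD

end

section

variable {V : Type} [Fintype V] {k : ℕ} {δ : Fin k → V → V} {E : V → Multiset V}

lemma IsColoring.exists_wordMap_eq (hδ : IsColoring E δ) {p q : V}
    (h : Relation.ReflTransGen (fun a b => b ∈ E a) p q) : ∃ u, wordMap δ u p = q := by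
  induction h with
  | refl => exact ⟨[], rfl⟩
  | tail _ hbc ih =>
    obtain ⟨u, rfl⟩ := ih
    obtain ⟨a, -, ha⟩ := Multiset.mem_map.mp ((hδ _).symm ▸ hbc)
    exact ⟨u ++ [a], by rw [wordMap_append, wordMap_cons, wordMap_nil, ha]⟩

variable [DecidableEq V] {w : V → ℕ} {D : Finset V}

def wordPreimage (δ : Fin k → V → V) (s : List (Fin k)) (D : Finset V) : Finset V :=
  {v | wordMap δ s v ∈ D}

@[simp] lemma mem_wordPreimage {s : List (Fin k)} {v : V} :
    v ∈ wordPreimage δ s D ↔ wordMap δ s v ∈ D := by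
  simp [wordPreimage]

lemma wordPreimage_nil : wordPreimage δ [] D = D := by
  ext; simp

lemma wordPreimage_cons (a : Fin k) (s : List (Fin k)) :
    wordPreimage δ (a :: s) D = wordPreimage δ [a] (wordPreimage δ s D) := by
  ext; simp

lemma weight_wordPreimage (w : V → ℕ) (s : List (Fin k)) (D : Finset V) :
    weight w (wordPreimage δ s D) = ∑ q ∈ D, weight w (wordPreimage δ s {q}) := by
  rw [weight, ← sum_fiberwise_of_maps_to (g := wordMap δ s) (t := D) fun v hv => by simpa using hv]
  refine sum_congr rfl fun q hq => sum_congr ?_ fun _ _ => rfl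
  ext v
  simp only [mem_filter, mem_wordPreimage, mem_singleton]
  exact ⟨And.right, fun h => ⟨h ▸ hq, h⟩⟩

lemma isSyncSet_iff : IsSyncSet δ D ↔ D.Nonempty ∧ ∃ s x, ∀ v ∈ D, wordMap δ s v = x := by
  refine ⟨fun ⟨s, hs⟩ => ?_, fun ⟨hne, s, x, hx⟩ => ⟨s, card_eq_one.mpr ⟨x, ?_⟩⟩⟩
  · obtain ⟨x, hx⟩ := card_eq_one.mp hs
    refine ⟨image_nonempty.mp (hx ▸ singleton_nonempty x), s, x, fun v hv => ?_⟩
    simpa [hx] using mem_image_of_mem (wordMap δ s) hv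
  · exact (hne.image _).subset_singleton_iff.mp fun y hy => by
      obtain ⟨v, hv, rfl⟩ := mem_image.mp hy
      simp [hx v hv]

lemma isSyncSet_singleton (v : V) : IsSyncSet δ {v} :=
  isSyncSet_iff.mpr ⟨singleton_nonempty v, [], v, by simp⟩

lemma IsSyncSet.syncPair (hD : IsSyncSet δ D) {p q : V} (hp : p ∈ D) (hq : q ∈ D) :
    SyncPair δ p q := by
  obtain ⟨-, s, x, hx⟩ := isSyncSet_iff.mp hD
  exact ⟨s, (hx p hp).trans (hx q hq).symm⟩

lemma IsSyncSet.wordPreimage (hD : IsSyncSet δ D) {s : List (Fin k)}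
    (hne : (wordPreimage δ s D).Nonempty) : IsSyncSet δ (wordPreimage δ s D) := by
  obtain ⟨-, t, x, hx⟩ := isSyncSet_iff.mp hD
  exact isSyncSet_iff.mpr ⟨hne, s ++ t, x, fun v hv => by
    rw [wordMap_append]; exact hx _ (mem_wordPreimage.mp hv)⟩

lemma exists_isFMaximal [Nonempty V] (δ : Fin k → V → V) (w : V → ℕ) :
    ∃ D, IsFMaximal δ w D := by
  classical
  obtain ⟨D, hD, hmax⟩ := exists_max_image {D : Finset V | IsSyncSet δ D} (weight w)
    ⟨{Classical.arbitrary V}, by simpa using isSyncSet_singleton _⟩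
  exact ⟨D, (mem_filter.mp hD).2, fun D' hD' => hmax D' (by simpa using hD')⟩

lemma IsFMaximal.weight_eq_wstar (hD : IsFMaximal δ w D) : weight w D = wstar δ w :=
  (IsGreatest.csSup_eq (s := {m | ∃ D, IsSyncSet δ D ∧ weight w D = m})
    ⟨⟨D, hD.1, rfl⟩, by rintro _ ⟨D', hD', rfl⟩; exact hD.2 D' hD'⟩).symm

lemma wstar_pos [Nonempty V] (δ : Fin k → V → V) (hw : ∀ v, 1 ≤ w v) : 0 < wstar δ w := by
  obtain ⟨D, hD⟩ := exists_isFMaximal δ w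
  exact hD.weight_eq_wstar ▸ weight_pos hw (isSyncSet_iff.mp hD.1).1

lemma IsColoring.count_eq_card (hδ : IsColoring E δ) (v q : V) :
    (E v).count q = #{a | δ a v = q} := by
  rw [← hδ v, Multiset.count_map]
  simp only [card, filter_val, eq_comm]

lemma IsColoring.sum_weight_wordPreimage_letter (hδ : IsColoring E δ)
    (hw : ∀ q, ∑ p, w p * (E p).count q = k * w q) (D : Finset V) :
    ∑ a, weight w (wordPreimage δ [a] D) = k * weight w D := by
  have hsingleton : ∀ q, ∑ a, weight w (wordPreimage δ [a] {q}) = k * w q := fun q =>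
    calc ∑ a, weight w (wordPreimage δ [a] {q})
        = ∑ a, ∑ v, if δ a v = q then w v else 0 := by
          simp [weight, wordPreimage, sum_filter]
      _ = ∑ v, #{a | δ a v = q} * w v := by
          rw [sum_comm]
          simp [← sum_filter]
      _ = k * w q := by
          simp only [← hδ.count_eq_card, mul_comm _ (w _), hw]
  rw [weight, mul_sum, ← sum_congr rfl fun q _ => hsingleton q, sum_comm]
  exact sum_congr rfl fun a _ => weight_wordPreimage w [a] D

lemma IsFMaximal.wordPreimage_letter (hδ : IsColoring E δ) (hw : IsWeight E k w)
    (hD : IsFMaximal δ w D) (a : Fin k) : IsFMaximal δ w (wordPreimage δ [a] D) := by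
  have hle : ∀ b : Fin k, weight w (wordPreimage δ [b] D) ≤ weight w D := fun b => by
    rcases (wordPreimage δ [b] D).eq_empty_or_nonempty with h | h
    · simp [h, weight]
    · exact hD.2 _ (hD.1.wordPreimage h)
  have heq : weight w (wordPreimage δ [a] D) = weight w D := by
    have hsum : ∑ b, weight w (wordPreimage δ [b] D) = ∑ _b : Fin k, weight w D := by
      rw [hδ.sum_weight_wordPreimage_letter hw.2, sum_const, card_univ, Fintype.card_fin,
        smul_eq_mul]
    exact (sum_eq_sum_iff_of_le fun b _ => hle b).mp hsum a (mem_univ a)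
  have hne : (wordPreimage δ [a] D).Nonempty :=
    nonempty_of_sum_ne_zero (heq ▸ weight_pos hw.1 (isSyncSet_iff.mp hD.1).1).ne'
  exact ⟨hD.1.wordPreimage hne, fun D' hD' => heq ▸ hD.2 D' hD'⟩

lemma IsFMaximal.wordPreimage (hδ : IsColoring E δ) (hw : IsWeight E k w)
    (hD : IsFMaximal δ w D) (s : List (Fin k)) : IsFMaximal δ w (wordPreimage δ s D) := by
  induction s with
  | nil => rwa [wordPreimage_nil]
  | cons a s ih => rw [wordPreimage_cons]; exact ih.wordPreimage_letter hδ hw a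

lemma exists_isFMaximal_mem (hδ : IsColoring E δ) (hw : IsWeight E k w)
    (hconn : ∀ u v : V, Relation.ReflTransGen (fun a b => b ∈ E a) u v) (q : V) :
    ∃ D, IsFMaximal δ w D ∧ q ∈ D := by
  have : Nonempty V := ⟨q⟩
  obtain ⟨D, hD⟩ := exists_isFMaximal δ w
  obtain ⟨d, hd⟩ := (isSyncSet_iff.mp hD.1).1
  obtain ⟨u, hu⟩ := hδ.exists_wordMap_eq (hconn q d)
  exact ⟨wordPreimage δ u D, hD.wordPreimage hδ hw u, mem_wordPreimage.mpr (hu ▸ hd)⟩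

lemma isFMaximal_wordPreimage_singleton (hδ : IsColoring E δ) (hw : IsWeight E k w)
    (hconn : ∀ u v : V, Relation.ReflTransGen (fun a b => b ∈ E a) u v) {s : List (Fin k)}
    (hdead : ∀ p ∈ univ.image (wordMap δ s), ∀ q ∈ univ.image (wordMap δ s), p ≠ q →
      ¬ SyncPair δ p q)
    {q : V} (hq : q ∈ univ.image (wordMap δ s)) : IsFMaximal δ w (wordPreimage δ s {q}) := by
  obtain ⟨D, hD, hqD⟩ := exists_isFMaximal_mem hδ hw hconn q
  convert hD.wordPreimage hδ hw s using 1
  ext v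
  simp only [mem_wordPreimage, mem_singleton]
  refine ⟨fun h => h ▸ hqD, fun h => ?_⟩
  by_contra hne
  exact hdead _ (mem_image_of_mem _ (mem_univ v)) q hq hne (hD.1.syncPair h hqD)

end

/-- Every F-clique has the same cardinality, equal to `w(V)/w*`
(the size of a partition of `V` into F-maximal sets). -/
theorem FClique_card {V : Type} [Fintype V] [DecidableEq V] [Nonempty V]
    (E : V → Multiset V) (k : ℕ) (hAGW : IsAGW E k)
    (δ : Fin k → V → V) (hδ : IsColoring E δ) (w : V → ℕ) (hw : IsWeight E k w)
    (F : Finset V) (hF : IsFClique δ F) :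
    F.card = weight w Finset.univ / wstar δ w ∧
      F.card * wstar δ w = weight w Finset.univ := by
  obtain ⟨⟨s, rfl⟩, hdead⟩ := hF
  have hfibers : ∀ q ∈ univ.image (wordMap δ s), weight w (wordPreimage δ s {q}) = wstar δ w :=
    fun q hq => (isFMaximal_wordPreimage_singleton hδ hw hAGW.2.1 hdead hq).weight_eq_wstar
  have hcover : wordPreimage δ s (univ.image (wordMap δ s)) = univ := by
    ext v; simp
  have hsum : #(univ.image (wordMap δ s)) * wstar δ w = weight w univ :=
    calc #(univ.image (wordMap δ s)) * wstar δ w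
        = ∑ q ∈ univ.image (wordMap δ s), weight w (wordPreimage δ s {q}) := by
          rw [sum_congr rfl hfibers, sum_const, smul_eq_mul]
      _ = weight w univ := by rw [← weight_wordPreimage, hcover]
  exact ⟨by rw [← hsum, Nat.mul_div_cancel _ (wstar_pos δ hw.1)], hsum⟩
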